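/- arXiv:1510.01254 — 3 statements merged into one kernel-verified Lean document; each statement's English description precedes it below -/
import Mathlib

section
/- Let H be a complex Hilbert space, A a bounded self-adjoint linear operator on H, and φ, ψ : ℝ → ℂ continuous functions. Let F : ℝ → ℝ be concave and monotone increasing on [0,∞) with F(0) = 0, such that |φ(t)|² = F(|ψ(t)|²) for all t ∈ ℝ. Then for every δ > 0 and every x ∈ H with ‖ψ(A)x‖ ≤ 1 and ‖x‖ ≤ δ, one has ‖φ(A)x‖ ≤ δ·√(F(1/δ²)); that is, the modulus of continuity of φ(A) on the class W^ψ = {x ∈ H : ‖ψ(A)x‖ ≤ 1} satisfies ω(δ) ≤ δ·√(F(1/δ²)). -/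
/-!
Put `c = δ⁻²`. Concavity gives a supporting line `F s ≤ F c + m (s - c)` on `[0, ∞)` whose slope
`m`, the right derivative of `F` at `c`, is nonnegative by monotonicity; `F 0 = 0` makes its
intercept `F c - m c` nonnegative. Thus `|φ|² ≤ (F c - m c) + m |ψ|²` pointwise, which the
functional calculus turns into `φ(A)⋆φ(A) ≤ (F c - m c) + m ψ(A)⋆ψ(A)`. Evaluated at `x`, this gives
`‖φ(A)x‖² ≤ (F c - m c) δ² + m = δ² F c`.
-/

open Set
open scoped ComplexOrder

section SupportingLine

variable {S : Set ℝ} {f : ℝ → ℝ} {x y : ℝ}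

lemma ConvexOn.add_rightDeriv_mul_sub_le (hf : ConvexOn ℝ S f) (hx : x ∈ interior S)
    (hy : y ∈ S) : f x + derivWithin f (Ioi x) x * (y - x) ≤ f y := by
  rcases lt_trichotomy y x with hyx | rfl | hxy
  · have h := (hf.slope_le_leftDeriv_of_mem_interior hy hx hyx).trans
      (hf.leftDeriv_le_rightDeriv_of_mem_interior hx)
    rw [slope_def_field, div_le_iff₀ (sub_pos.2 hyx)] at h
    linarith
  · simp
  · have h := hf.rightDeriv_le_slope_of_mem_interior hx hy hxy
    rw [slope_def_field, le_div_iff₀ (sub_pos.2 hxy)] at h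
    linarith

lemma ConcaveOn.le_add_rightDeriv_mul_sub (hf : ConcaveOn ℝ S f) (hx : x ∈ interior S)
    (hy : y ∈ S) : f y ≤ f x + derivWithin f (Ioi x) x * (y - x) := by
  have h := hf.neg.add_rightDeriv_mul_sub_le hx hy
  rw [derivWithin.neg] at h
  simp only [Pi.neg_apply] at h
  linarith

end SupportingLine

lemma star_cfc_mul_cfc_le_of_norm_sq_le {A : Type*} [CStarAlgebra A] [PartialOrder A]
    [StarOrderedRing A] {f g : ℂ → ℂ} {a : A} {β m : ℝ}
    (hfg : ∀ z ∈ spectrum ℂ a, ‖f z‖ ^ 2 ≤ β + m * ‖g z‖ ^ 2)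
    (hf : ContinuousOn f (spectrum ℂ a) := by cfc_cont_tac)
    (hg : ContinuousOn g (spectrum ℂ a) := by cfc_cont_tac)
    (ha : IsStarNormal a := by cfc_tac) :
    star (cfc f a) * cfc f a ≤ β • 1 + m • (star (cfc g a) * cfc g a) := by
  rw [← cfc_star, ← cfc_mul .., ← cfc_star, ← cfc_mul .., ← cfc_smul .., ← cfc_const_one ℂ a,
    ← cfc_smul .., ← cfc_add ..]
  refine cfc_mono fun z hz => ?_
  simp only [Complex.star_def, Complex.conj_mul', Complex.real_smul, mul_one]
  exact_mod_cast hfg z hz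

lemma ContinuousLinearMap.norm_sq_apply_le_of_star_mul_self_le {E : Type*}
    [NormedAddCommGroup E] [InnerProductSpace ℂ E] [CompleteSpace E] {T S : E →L[ℂ] E} {β m : ℝ}
    (h : star T * T ≤ β • 1 + m • (star S * S)) (x : E) :
    ‖T x‖ ^ 2 ≤ β * ‖x‖ ^ 2 + m * ‖S x‖ ^ 2 := by
  have := ((ContinuousLinearMap.le_def _ _).1 h).re_inner_nonneg_left x
  rw [apply_norm_sq_eq_inner_adjoint_left, apply_norm_sq_eq_inner_adjoint_left]
  simpa [inner_add_left, inner_sub_left, star_eq_adjoint, ← Complex.ofReal_pow] using this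

/-- **Upper bound for the modulus of continuity of `φ(A)` on the class
`W^ψ = {x : ‖ψ(A)x‖ ≤ 1}`.** Here `g(A)` is encoded by applying the continuous
functional calculus of the self-adjoint operator `A` to `z ↦ g(Re z)`. If
`|φ(t)|² = F(|ψ(t)|²)` with `F` concave, monotone increasing on `[0,∞)` and
`F(0) = 0`, then every `x` with `‖ψ(A)x‖ ≤ 1` and `‖x‖ ≤ δ` satisfies
`‖φ(A)x‖ ≤ δ·√(F(1/δ²))`; that is, `ω(δ) ≤ δ·√(F(1/δ²))`. -/
theorem modulus_of_continuity_upper_bound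
    {H : Type*} [NormedAddCommGroup H] [InnerProductSpace ℂ H] [CompleteSpace H]
    (A : H →L[ℂ] H) (hA : IsSelfAdjoint A)
    (φ ψ : ℝ → ℂ) (hφ : Continuous φ) (hψ : Continuous ψ)
    (F : ℝ → ℝ) (hFconc : ConcaveOn ℝ (Set.Ici 0) F)
    (hFmono : MonotoneOn F (Set.Ici 0)) (hF0 : F 0 = 0)
    (hFφψ : ∀ t : ℝ, ‖φ t‖ ^ 2 = F (‖ψ t‖ ^ 2))
    (δ : ℝ) (hδ : 0 < δ) :
    (∀ x : H, ‖cfc (fun z : ℂ => ψ z.re) A x‖ ≤ 1 → ‖x‖ ≤ δ →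
      ‖cfc (fun z : ℂ => φ z.re) A x‖ ≤ δ * Real.sqrt (F (1 / δ ^ 2))) ∧
    sSup {r : ℝ | ∃ x : H, ‖cfc (fun z : ℂ => ψ z.re) A x‖ ≤ 1 ∧ ‖x‖ ≤ δ ∧
        r = ‖cfc (fun z : ℂ => φ z.re) A x‖}
      ≤ δ * Real.sqrt (F (1 / δ ^ 2)) := by
  set c : ℝ := 1 / δ ^ 2
  set m : ℝ := derivWithin F (Ioi c) c
  have hc : 0 < c := by positivity
  have hFle (s : ℝ) (hs : 0 ≤ s) : F s ≤ F c + m * (s - c) :=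
    hFconc.le_add_rightDeriv_mul_sub (by rwa [interior_Ici]) hs
  have hm : 0 ≤ m := (hFmono.mono (Ioi_subset_Ici hc.le)).derivWithin_nonneg
  have hβ : 0 ≤ F c - m * c := by linarith [hFle 0 le_rfl, hF0]
  have hA' : IsStarNormal A := hA.isStarNormal
  have bound (x : H) (hψx : ‖cfc (fun z : ℂ => ψ z.re) A x‖ ≤ 1) (hx : ‖x‖ ≤ δ) :
      ‖cfc (fun z : ℂ => φ z.re) A x‖ ≤ δ * Real.sqrt (F c) := by
    have hφψ : ∀ z ∈ spectrum ℂ A, ‖φ z.re‖ ^ 2 ≤ (F c - m * c) + m * ‖ψ z.re‖ ^ 2 :=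
      fun z _ => by linarith [hFφψ z.re, hFle _ (sq_nonneg ‖ψ z.re‖)]
    have hcδ : c * δ ^ 2 = 1 := one_div_mul_cancel (by positivity)
    rw [← Real.sqrt_sq hδ.le, ← Real.sqrt_mul (sq_nonneg δ)]
    apply Real.le_sqrt_of_sq_le
    calc ‖cfc (fun z : ℂ => φ z.re) A x‖ ^ 2
        ≤ (F c - m * c) * ‖x‖ ^ 2 + m * ‖cfc (fun z : ℂ => ψ z.re) A x‖ ^ 2 :=
          ContinuousLinearMap.norm_sq_apply_le_of_star_mul_self_le
            (star_cfc_mul_cfc_le_of_norm_sq_le hφψ) x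
      _ ≤ (F c - m * c) * δ ^ 2 + m * 1 ^ 2 := by gcongr
      _ = δ ^ 2 * F c := by linear_combination (-m) * hcδ
  refine ⟨bound, Real.sSup_le ?_ (by positivity)⟩
  rintro r ⟨x, hψx, hx, rfl⟩
  exact bound x hψx hx
end

section
/- Let φ, ψ : ℝ → ℂ be continuous even functions such that |φ| and |ψ| are strictly increasing on (0,∞) and |φ(t)|/|ψ(t)| is non-increasing on (0,∞). Fix b > 0 and let φ_b be as defined. Then for every finite Borel measure μ on ℝ, ∫ℝ |φ(t) − φ_b(t)|² dμ(t) ≤ (|φ(b)|/|ψ(b)|)² · ∫ℝ |ψ(t)|² dμ(t). -/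
/-!
Inside `[-b, b]` the deviation `φ - φ_b` is exactly `(φ(b)/ψ(b))·ψ`. Outside, it is `φ` itself,
and evenness together with the monotonicity of `|φ|/|ψ|` gives `|φ(t)| ≤ (|φ(b)|/|ψ(b)|)·|ψ(t)|`
there (`ψ` does not vanish on `(0, ∞)` since `|ψ|` is strictly increasing). Squaring and
integrating this pointwise bound gives the claim for any measure.
-/

open MeasureTheory
open scoped ENNReal NNReal

/-- The truncation `φ_b(t) = φ(t) − (φ(b)/ψ(b))·ψ(t)` for `|t| ≤ b`, `0` otherwise. -/
noncomputable def phib (φ ψ : ℝ → ℂ) (b : ℝ) : ℝ → ℂ :=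
  fun t => if |t| ≤ b then φ t - (φ b / ψ b) * ψ t else 0

theorem apply_abs_of_even {G α : Type*} [AddGroup G] [LinearOrder G] {f : G → α}
    (hf : ∀ x, f (-x) = f x) (x : G) : f |x| = f x := by
  rcases abs_choice x with h | h <;> simp [h, hf]

theorem norm_pos_of_strictMonoOn_norm {E : Type*} [SeminormedAddGroup E] {f : ℝ → E}
    (hf : StrictMonoOn (fun t => ‖f t‖) (Set.Ioi 0)) {t : ℝ} (ht : 0 < t) : 0 < ‖f t‖ :=
  (norm_nonneg _).trans_lt (hf (half_pos ht) ht (half_lt_self ht))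

theorem norm_sub_phib_le {φ ψ : ℝ → ℂ}
    (hφe : ∀ t : ℝ, φ (-t) = φ t) (hψe : ∀ t : ℝ, ψ (-t) = ψ t)
    (hψm : StrictMonoOn (fun t => ‖ψ t‖) (Set.Ioi (0 : ℝ)))
    (hratio : AntitoneOn (fun t => ‖φ t‖ / ‖ψ t‖) (Set.Ioi (0 : ℝ)))
    {b : ℝ} (hb : 0 < b) (t : ℝ) :
    ‖φ t - phib φ ψ b t‖ ≤ ‖φ b‖ / ‖ψ b‖ * ‖ψ t‖ := by
  unfold phib
  split_ifs with ht
  · rw [sub_sub_cancel, norm_mul, norm_div]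
  · have htb : b < |t| := not_le.mp ht
    have hratio_t := hratio hb (hb.trans htb) htb.le
    have hψt := norm_pos_of_strictMonoOn_norm hψm (hb.trans htb)
    simp only [apply_abs_of_even hφe, apply_abs_of_even hψe] at hratio_t hψt
    calc ‖φ t - 0‖ = ‖φ t‖ / ‖ψ t‖ * ‖ψ t‖ := by rw [sub_zero, div_mul_cancel₀ _ hψt.ne']
      _ ≤ ‖φ b‖ / ‖ψ b‖ * ‖ψ t‖ := by gcongr

theorem lintegral_nnnorm_pow_le_of_norm_le {α E F : Type*} [MeasurableSpace α]
    [SeminormedAddGroup E] [SeminormedAddGroup F] (μ : Measure α) {f : α → E} {g : α → F}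
    {c : ℝ} (hc : 0 ≤ c) (hfg : ∀ x, ‖f x‖ ≤ c * ‖g x‖) (n : ℕ) :
    ∫⁻ x, (‖f x‖₊ : ℝ≥0∞) ^ n ∂μ ≤ ENNReal.ofReal (c ^ n) * ∫⁻ x, (‖g x‖₊ : ℝ≥0∞) ^ n ∂μ := by
  rw [← lintegral_const_mul' _ _ ENNReal.ofReal_ne_top]
  refine lintegral_mono fun x => ?_
  rw [ENNReal.ofReal_pow hc, ← mul_pow]
  gcongr
  simp only [← enorm_eq_nnnorm, ← ofReal_norm, ← ENNReal.ofReal_mul hc]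
  exact ENNReal.ofReal_le_ofReal (hfg x)

theorem integral_phib_deviation_sq_le_general
    (φ ψ : ℝ → ℂ)
    (hφe : ∀ t : ℝ, φ (-t) = φ t) (hψe : ∀ t : ℝ, ψ (-t) = ψ t)
    (hψm : StrictMonoOn (fun t => ‖ψ t‖) (Set.Ioi (0 : ℝ)))
    (hratio : AntitoneOn (fun t => ‖φ t‖ / ‖ψ t‖) (Set.Ioi (0 : ℝ)))
    (b : ℝ) (hb : 0 < b)
    (μ : Measure ℝ) :
    ∫⁻ t, (‖φ t - phib φ ψ b t‖₊ : ℝ≥0∞) ^ 2 ∂μ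
      ≤ ENNReal.ofReal ((‖φ b‖ / ‖ψ b‖) ^ 2) * ∫⁻ t, (‖ψ t‖₊ : ℝ≥0∞) ^ 2 ∂μ :=
  lintegral_nnnorm_pow_le_of_norm_le μ (by positivity)
    (norm_sub_phib_le hφe hψe hψm hratio hb) 2

/-- For every finite Borel measure `μ` on `ℝ`,
`∫ |φ − φ_b|² dμ ≤ (|φ(b)|/|ψ(b)|)² · ∫ |ψ|² dμ`
(integrals taken in `[0,∞]`). -/
theorem integral_phib_deviation_sq_le
    (φ ψ : ℝ → ℂ) (hφc : Continuous φ) (hψc : Continuous ψ)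
    (hφe : ∀ t : ℝ, φ (-t) = φ t) (hψe : ∀ t : ℝ, ψ (-t) = ψ t)
    (hφm : StrictMonoOn (fun t => ‖φ t‖) (Set.Ioi (0 : ℝ)))
    (hψm : StrictMonoOn (fun t => ‖ψ t‖) (Set.Ioi (0 : ℝ)))
    (hratio : AntitoneOn (fun t => ‖φ t‖ / ‖ψ t‖) (Set.Ioi (0 : ℝ)))
    (b : ℝ) (hb : 0 < b)
    (μ : Measure ℝ) [IsFiniteMeasure μ] :
    ∫⁻ t, (‖φ t - phib φ ψ b t‖₊ : ℝ≥0∞) ^ 2 ∂μ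
      ≤ ENNReal.ofReal ((‖φ b‖ / ‖ψ b‖) ^ 2) * ∫⁻ t, (‖ψ t‖₊ : ℝ≥0∞) ^ 2 ∂μ :=
  integral_phib_deviation_sq_le_general φ ψ hφe hψe hψm hratio b hb μ
end

section
/- Let H be a complex Hilbert space and A a bounded self-adjoint linear operator on H. Let φ, ψ : ℝ → ℂ be continuous even functions with φ(t) ≠ 0 for all t ∈ ℝ, such that |φ| and |ψ| are strictly increasing on (0,∞) and |φ(t)|/|ψ(t)| is non-increasing on (0,∞). Fix b > 0 and let N(b) and η_b be as defined. Then for every x ∈ H with ‖(ψ/φ)(A)x‖ ≤ 1, the element y = η_b(A)x satisfies ‖ψ(A)y‖ ≤ N(b) and ‖x − y‖ ≤ |φ(b)|/|ψ(b)|. In particular, every element of the class W^{ψ/φ} = {x : ‖(ψ/φ)(A)x‖ ≤ 1} lies within distance |φ(b)|/|ψ(b)| of the set N(b)·W^ψ = {z : ‖ψ(A)z‖ ≤ N(b)}. -/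
/-- `N(b) = sup_{t ∈ ℝ} |φ_b(t)|`. -/
noncomputable def Nb (φ ψ : ℝ → ℂ) (b : ℝ) : ℝ :=
  ⨆ t : ℝ, ‖phib φ ψ b t‖

/-- `η_b(t) = 1 − (φ(b)/ψ(b))·(ψ(t)/φ(t))` for `|t| ≤ b`, `0` otherwise. -/
noncomputable def etab (φ ψ : ℝ → ℂ) (b : ℝ) : ℝ → ℂ :=
  fun t => if |t| ≤ b then 1 - (φ b / ψ b) * (ψ t / φ t) else 0

/-!
With `g = ψ/φ`, both estimates come from factoring through `g(A)`. On `[-b, b]` one has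
`ψ η_b = φ_b g`, and `η_b = 0` outside, so `ψ(A) η_b(A) = φ_b(A) g(A)` with `‖φ_b(A)‖ ≤ N(b)`
(finite, as `φ_b` is continuous with compact support).
Likewise `1 - η_b = m g`, where `m` equals `φ(b)/ψ(b)` on `[-b, b]` and `φ/ψ` outside; since
`|φ|/|ψ|` is non-increasing, `‖m(A)‖ ≤ |φ(b)|/|ψ(b)|`.
-/

open Set
open Complex (continuous_re)

theorem Function.Even.apply_abs {α : Type*} {f : ℝ → α} (hf : f.Even) (t : ℝ) : f |t| = f t := by
  rcases abs_choice t with h | h <;> rw [h]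
  exact hf t

theorem ne_zero_of_strictMonoOn_norm {E : Type*} [NormedAddCommGroup E] {f : ℝ → E}
    (hf : StrictMonoOn (fun t => ‖f t‖) (Ioi 0)) {s : ℝ} (hs : 0 < s) : f s ≠ 0 := by
  intro h
  have := hf (half_pos hs) hs (half_lt_self hs)
  simp only [h, norm_zero] at this
  exact (norm_nonneg _).not_gt this

section Truncation

variable {E : Type*} [Zero E] {f : ℝ → E} {b : ℝ}

theorem continuous_ite_abs_le [TopologicalSpace E] (hf : Continuous f) (hfb : f b = 0)
    (hfnb : f (-b) = 0) : Continuous fun t => if |t| ≤ b then f t else 0 := by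
  refine Continuous.if_le hf continuous_const continuous_abs continuous_const fun t ht => ?_
  rcases (abs_eq (ht ▸ abs_nonneg t)).mp ht with rfl | rfl <;> assumption

theorem hasCompactSupport_ite_abs_le : HasCompactSupport fun t => if |t| ≤ b then f t else 0 :=
  .intro (isCompact_Icc (a := -b) (b := b)) fun _ ht => if_neg (mt abs_le.mp ht)

end Truncation

theorem norm_cfc_apply_le_of_eqOn_mul {H : Type*} [NormedAddCommGroup H] [InnerProductSpace ℂ H]
    [CompleteSpace H] {A : H →L[ℂ] H} [IsStarNormal A] {f g h : ℂ → ℂ}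
    (hg : ContinuousOn g (spectrum ℂ A)) (hh : ContinuousOn h (spectrum ℂ A))
    (hfgh : EqOn f (fun z => h z * g z) (spectrum ℂ A)) {C : ℝ} (hC : 0 ≤ C)
    (hhC : ∀ z ∈ spectrum ℂ A, ‖h z‖ ≤ C) (x : H) :
    ‖cfc f A x‖ ≤ C * ‖cfc g A x‖ := by
  rw [cfc_congr hfgh, cfc_mul h g A, mul_apply_eq_comp]
  exact (cfc h A).le_of_opNorm_le (norm_cfc_le hC hhC) _

noncomputable def clampedRatio (φ ψ : ℝ → ℂ) (b t : ℝ) : ℂ :=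
  φ (max |t| b) / ψ (max |t| b)

section RealFunctions

variable {φ ψ : ℝ → ℂ} {b : ℝ}

theorem continuous_phib (hφc : Continuous φ) (hψc : Continuous ψ) (hφe : φ.Even)
    (hψe : ψ.Even) (hψb : ψ b ≠ 0) : Continuous (phib φ ψ b) :=
  have hb : φ b - φ b / ψ b * ψ b = 0 := by rw [div_mul_cancel₀ _ hψb, sub_self]
  continuous_ite_abs_le (hφc.sub (continuous_const.mul hψc)) hb (by rwa [hφe.eq, hψe.eq])

theorem continuous_etab (hφc : Continuous φ) (hψc : Continuous ψ) (hφ0 : ∀ t, φ t ≠ 0)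
    (hφe : φ.Even) (hψe : ψ.Even) (hψb : ψ b ≠ 0) : Continuous (etab φ ψ b) :=
  have hb : 1 - φ b / ψ b * (ψ b / φ b) = 0 := by
    rw [div_mul_div_cancel₀' (hφ0 b), div_self hψb, sub_self]
  continuous_ite_abs_le (continuous_const.sub (continuous_const.mul (hψc.div hφc hφ0))) hb
    (by rwa [hφe.eq, hψe.eq])

theorem continuous_clampedRatio (hφc : Continuous φ) (hψc : Continuous ψ)
    (hψ : ∀ s, b ≤ s → ψ s ≠ 0) : Continuous (clampedRatio φ ψ b) :=
  have hmax : Continuous fun t : ℝ => max |t| b := continuous_abs.max continuous_const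
  (hφc.comp hmax).div (hψc.comp hmax) fun _ => hψ _ (le_max_right _ _)

theorem Nb_nonneg : 0 ≤ Nb φ ψ b :=
  Real.iSup_nonneg fun _ => norm_nonneg _

theorem norm_phib_le_Nb (hcont : Continuous (phib φ ψ b)) (t : ℝ) :
    ‖phib φ ψ b t‖ ≤ Nb φ ψ b :=
  le_ciSup (hcont.norm.bddAbove_range_of_hasCompactSupport hasCompactSupport_ite_abs_le.norm) t

theorem norm_clampedRatio_le (hratio : AntitoneOn (fun t => ‖φ t‖ / ‖ψ t‖) (Ioi 0))
    (hb : 0 < b) (t : ℝ) : ‖clampedRatio φ ψ b t‖ ≤ ‖φ b‖ / ‖ψ b‖ := by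
  rw [clampedRatio, norm_div]
  exact hratio hb (hb.trans_le (le_max_right _ _)) (le_max_right _ _)

theorem mul_etab_eq_phib_mul {t : ℝ} (hφt : φ t ≠ 0) :
    ψ t * etab φ ψ b t = phib φ ψ b t * (ψ t / φ t) := by
  unfold etab phib
  split_ifs
  · field_simp
  · simp

theorem one_sub_etab_eq_clampedRatio_mul (hφ0 : ∀ t, φ t ≠ 0) (hφe : φ.Even) (hψe : ψ.Even)
    (hψ : ∀ s, b ≤ s → ψ s ≠ 0) (t : ℝ) :
    1 - etab φ ψ b t = clampedRatio φ ψ b t * (ψ t / φ t) := by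
  unfold etab clampedRatio
  split_ifs with h
  · rw [max_eq_right h]
    ring
  · have h' : b ≤ |t| := (not_le.mp h).le
    have hψt : ψ t ≠ 0 := hψe.apply_abs t ▸ hψ _ h'
    rw [max_eq_left h', hφe.apply_abs, hψe.apply_abs, div_mul_div_cancel₀' (hφ0 t),
      div_self hψt, sub_zero]

end RealFunctions

section Operators

variable {H : Type*} [NormedAddCommGroup H] [InnerProductSpace ℂ H] [CompleteSpace H]
  {A : H →L[ℂ] H} [IsStarNormal A] {φ ψ : ℝ → ℂ} {b : ℝ}

theorem norm_cfc_cfc_etab_le (hφc : Continuous φ) (hψc : Continuous ψ) (hφ0 : ∀ t, φ t ≠ 0)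
    (hφe : φ.Even) (hψe : ψ.Even) (hψb : ψ b ≠ 0) (x : H) :
    ‖cfc (fun z : ℂ => ψ z.re) A (cfc (fun z : ℂ => etab φ ψ b z.re) A x)‖ ≤
      Nb φ ψ b * ‖cfc (fun z : ℂ => ψ z.re / φ z.re) A x‖ := by
  have hΦ := continuous_phib hφc hψc hφe hψe hψb
  rw [← mul_apply_eq_comp, ← cfc_mul (fun z : ℂ => ψ z.re) (fun z : ℂ => etab φ ψ b z.re) A
    (hψc.comp continuous_re).continuousOn
    ((continuous_etab hφc hψc hφ0 hφe hψe hψb).comp continuous_re).continuousOn]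
  exact norm_cfc_apply_le_of_eqOn_mul ((hψc.div hφc hφ0).comp continuous_re).continuousOn
    (hΦ.comp continuous_re).continuousOn (fun z _ => mul_etab_eq_phib_mul (hφ0 z.re))
    Nb_nonneg (fun z _ => norm_phib_le_Nb hΦ z.re) x

theorem norm_sub_cfc_etab_le (hφc : Continuous φ) (hψc : Continuous ψ) (hφ0 : ∀ t, φ t ≠ 0)
    (hφe : φ.Even) (hψe : ψ.Even) (hψ : ∀ s, b ≤ s → ψ s ≠ 0)
    (hratio : AntitoneOn (fun t => ‖φ t‖ / ‖ψ t‖) (Ioi 0)) (hb : 0 < b) (x : H) :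
    ‖x - cfc (fun z : ℂ => etab φ ψ b z.re) A x‖ ≤
      ‖φ b‖ / ‖ψ b‖ * ‖cfc (fun z : ℂ => ψ z.re / φ z.re) A x‖ := by
  have hsub : x - cfc (fun z : ℂ => etab φ ψ b z.re) A x =
      cfc (fun z : ℂ => 1 - etab φ ψ b z.re) A x := by
    rw [cfc_sub (fun _ : ℂ => (1 : ℂ)) (fun z : ℂ => etab φ ψ b z.re) A continuousOn_const
      ((continuous_etab hφc hψc hφ0 hφe hψe (hψ b le_rfl)).comp continuous_re).continuousOn,
      cfc_const_one ℂ A]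
    rfl
  rw [hsub]
  exact norm_cfc_apply_le_of_eqOn_mul ((hψc.div hφc hφ0).comp continuous_re).continuousOn
    ((continuous_clampedRatio hφc hψc hψ).comp continuous_re).continuousOn
    (fun z _ => one_sub_etab_eq_clampedRatio_mul hφ0 hφe hψe hψ z.re) (by positivity)
    (fun z _ => norm_clampedRatio_le hratio hb z.re) x

end Operators

theorem class_approx_by_homothet_general
    {H : Type*} [NormedAddCommGroup H] [InnerProductSpace ℂ H] [CompleteSpace H]
    (A : H →L[ℂ] H) (hA : IsSelfAdjoint A)
    (φ ψ : ℝ → ℂ) (hφc : Continuous φ) (hψc : Continuous ψ)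
    (hφ0 : ∀ t : ℝ, φ t ≠ 0)
    (hφe : ∀ t : ℝ, φ (-t) = φ t) (hψe : ∀ t : ℝ, ψ (-t) = ψ t)
    (hψm : StrictMonoOn (fun t => ‖ψ t‖) (Set.Ioi (0 : ℝ)))
    (hratio : AntitoneOn (fun t => ‖φ t‖ / ‖ψ t‖) (Set.Ioi (0 : ℝ)))
    (b : ℝ) (hb : 0 < b) :
    (∀ x : H, ‖cfc (fun z : ℂ => ψ z.re / φ z.re) A x‖ ≤ 1 →
      ‖cfc (fun z : ℂ => ψ z.re) A (cfc (fun z : ℂ => etab φ ψ b z.re) A x)‖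
          ≤ Nb φ ψ b ∧
      ‖x - cfc (fun z : ℂ => etab φ ψ b z.re) A x‖ ≤ ‖φ b‖ / ‖ψ b‖) ∧
    (∀ x : H, ‖cfc (fun z : ℂ => ψ z.re / φ z.re) A x‖ ≤ 1 →
      ∃ z : H, ‖cfc (fun z' : ℂ => ψ z'.re) A z‖ ≤ Nb φ ψ b ∧
        ‖x - z‖ ≤ ‖φ b‖ / ‖ψ b‖) := by
  have := hA.isStarNormal
  have hψ : ∀ s, b ≤ s → ψ s ≠ 0 := fun s hs => ne_zero_of_strictMonoOn_norm hψm (hb.trans_le hs)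
  have approx : ∀ x : H, ‖cfc (fun z : ℂ => ψ z.re / φ z.re) A x‖ ≤ 1 →
      ‖cfc (fun z : ℂ => ψ z.re) A (cfc (fun z : ℂ => etab φ ψ b z.re) A x)‖ ≤ Nb φ ψ b ∧
      ‖x - cfc (fun z : ℂ => etab φ ψ b z.re) A x‖ ≤ ‖φ b‖ / ‖ψ b‖ := fun x hx =>
    ⟨(norm_cfc_cfc_etab_le hφc hψc hφ0 hφe hψe (hψ b le_rfl) x).trans
        (mul_le_of_le_one_right Nb_nonneg hx),
      (norm_sub_cfc_etab_le hφc hψc hφ0 hφe hψe hψ hratio hb x).trans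
        (mul_le_of_le_one_right (by positivity) hx)⟩
  exact ⟨approx, fun x hx => ⟨_, approx x hx⟩⟩

/-- **Approximation of the class `W^{ψ/φ}` by the homothet `N(b)·W^ψ`.** Here
`g(A)` is encoded via the continuous functional calculus of the self-adjoint
operator `A` applied to `z ↦ g(Re z)`. If `‖(ψ/φ)(A)x‖ ≤ 1`, then the element
`y = η_b(A)x` satisfies `‖ψ(A)y‖ ≤ N(b)` and `‖x − y‖ ≤ |φ(b)|/|ψ(b)|`; in
particular every element of `W^{ψ/φ}` lies within distance `|φ(b)|/|ψ(b)|` of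
the set `{z : ‖ψ(A)z‖ ≤ N(b)}`. -/
theorem class_approx_by_homothet
    {H : Type*} [NormedAddCommGroup H] [InnerProductSpace ℂ H] [CompleteSpace H]
    (A : H →L[ℂ] H) (hA : IsSelfAdjoint A)
    (φ ψ : ℝ → ℂ) (hφc : Continuous φ) (hψc : Continuous ψ)
    (hφ0 : ∀ t : ℝ, φ t ≠ 0)
    (hφe : ∀ t : ℝ, φ (-t) = φ t) (hψe : ∀ t : ℝ, ψ (-t) = ψ t)
    (hφm : StrictMonoOn (fun t => ‖φ t‖) (Set.Ioi (0 : ℝ)))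
    (hψm : StrictMonoOn (fun t => ‖ψ t‖) (Set.Ioi (0 : ℝ)))
    (hratio : AntitoneOn (fun t => ‖φ t‖ / ‖ψ t‖) (Set.Ioi (0 : ℝ)))
    (b : ℝ) (hb : 0 < b) :
    (∀ x : H, ‖cfc (fun z : ℂ => ψ z.re / φ z.re) A x‖ ≤ 1 →
      ‖cfc (fun z : ℂ => ψ z.re) A (cfc (fun z : ℂ => etab φ ψ b z.re) A x)‖
          ≤ Nb φ ψ b ∧
      ‖x - cfc (fun z : ℂ => etab φ ψ b z.re) A x‖ ≤ ‖φ b‖ / ‖ψ b‖) ∧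
    (∀ x : H, ‖cfc (fun z : ℂ => ψ z.re / φ z.re) A x‖ ≤ 1 →
      ∃ z : H, ‖cfc (fun z' : ℂ => ψ z'.re) A z‖ ≤ Nb φ ψ b ∧
        ‖x - z‖ ≤ ‖φ b‖ / ‖ψ b‖) :=
  class_approx_by_homothet_general A hA φ ψ hφc hψc hφ0 hφe hψe hψm hratio b hb
end
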